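/- A square-free monomial x_M = ∏_{a ∈ M} x_a (for a finite subset M of N) lies in the radical of J^{⟨t⟩} if and only if M is not contained in any t-signed subset of N. -/

import Mathlib

/-!
Both directions go through points `f : N → K` of a field at which all generators of `J^⟨t⟩`
vanish: such a point kills `x_M` iff it vanishes somewhere on `M`, and the radical of `J^⟨t⟩` is
the intersection of the kernels of such evaluations (with `K` the fraction field of `R/P` for the
primes `P ⊇ J^⟨t⟩`).

If `2 ≠ 0` in `K`, the support of such a point is `t`-signed. Switchability is read off the
generators. In a connectedness class whose `i`-th coordinate (`i < t`) is not constant, either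
every edge of the class is in direction `i`, and the class has diameter at most one, or some edge
is not, and then the class takes only two values `p, q` at `i`, since three values would give
`2 x y z = 0` from three generators on the square over that edge. In the latter case
`x ↦ f(x[i := p]) / f(x[i := q]) · (±1 according as x_i = p or q)` changes sign along every
edge, so the parity of path lengths is path-independent.

Conversely every `t`-signed set `S` is the support of such a point over `k̄`: take `1` on the
classes of the first two kinds and `ι ^ (parity of the distance to a base point)`, `ι² = -1`, on
the others, where each generator becomes `ι^(2e) (1 + ι²) = 0`.
-/

open MvPolynomial Finset

/-- The index set `N = [r 1] × ⋯ × [r n]`, realized as dependent functions. -/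
abbrev Idx {n : ℕ} (r : Fin n → ℕ) := ∀ i, Fin (r i)

variable {n : ℕ} {r : Fin n → ℕ}

/-- The switch `s(K,a,b)`: `b i` in the components of `K`, `a i` elsewhere. -/
def sw (K : Finset (Fin n)) (a b : Idx r) : Idx r := fun i => if i ∈ K then b i else a i

/-- The distance `d(a,b) = #{i : a i ≠ b i}`. -/
def hdist (a b : Idx r) : ℕ := (univ.filter fun i => a i ≠ b i).card

/-- The truncated distance `d_t(a,b) = #{i ∈ [t] : a i ≠ b i}`. -/
def hdistT (t : ℕ) (a b : Idx r) : ℕ :=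
  (univ.filter fun i : Fin n => (i : ℕ) < t ∧ a i ≠ b i).card

/-- `c : ℕ → N` is a path of length `m` from `a` to `b` inside `S`:
consecutive elements differ in exactly one component. -/
def IsPath (S : Set (Idx r)) (a b : Idx r) (m : ℕ) (c : ℕ → Idx r) : Prop :=
  c 0 = a ∧ c m = b ∧ (∀ j ≤ m, c j ∈ S) ∧ ∀ j < m, hdist (c j) (c (j + 1)) = 1

/-- `a` and `b` are connected in `S`. -/
def Connected (S : Set (Idx r)) (a b : Idx r) : Prop := ∃ m c, IsPath S a b m c

/-- The minimal path length `pl_S(a,b)`. -/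
noncomputable def pl (S : Set (Idx r)) (a b : Idx r) : ℕ :=
  sInf {m | ∃ c, IsPath S a b m c}

/-- `S` is `t`-switchable. -/
def Switchable (t : ℕ) (S : Set (Idx r)) : Prop :=
  ∀ a ∈ S, ∀ b ∈ S, hdist a b = 2 → ∀ i : Fin n, (i : ℕ) < t →
    sw {i} a b ∈ S ∧ sw {i} b a ∈ S

/-- `S` is `t`-signed: `t`-switchable, and each connectedness class satisfies one of:
constant first `t` coordinates, pairwise distance at most 1, or path-independent
parity of path lengths. -/
def Signed (t : ℕ) (S : Set (Idx r)) : Prop :=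
  Switchable t S ∧
  ∀ a ∈ S,
    (∀ b c, Connected S a b → Connected S a c → ∀ i : Fin n, (i : ℕ) < t → b i = c i) ∨
    (∀ b c, Connected S a b → Connected S a c → hdist b c ≤ 1) ∨
    (∀ b c, Connected S a b → Connected S a c →
      ∀ m m' p p', IsPath S b c m p → IsPath S b c m' p' → m % 2 = m' % 2)

variable (k : Type*) [Field k]

/-- The generalized determinant `f_{i,a,b}`. -/
noncomputable def fdet (i : Fin n) (a b : Idx r) : MvPolynomial (Idx r) k :=
  X a * X b - X (sw {i} a b) * X (sw {i} b a)

/-- The generalized permanent `g_{i,a,b}`. -/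
noncomputable def gperm (i : Fin n) (a b : Idx r) : MvPolynomial (Idx r) k :=
  X a * X b + X (sw {i} a b) * X (sw {i} b a)

/-- The binomial `h_{S,K,a,b}`. -/
noncomputable def hbin (S : Set (Idx r)) (K : Finset (Fin n)) (a b : Idx r) :
    MvPolynomial (Idx r) k :=
  X a * X b - (-1) ^ (K.card * (pl S a b - 1)) * (X (sw K a b) * X (sw K b a))

/-- The slice permanental ideal `J^⟨t⟩`. -/
noncomputable def Jt (t : ℕ) : Ideal (MvPolynomial (Idx r) k) :=
  Ideal.span {p | ∃ (a b : Idx r) (i : Fin n),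
    hdist a b = 2 ∧ (i : ℕ) < t ∧ a i ≠ b i ∧ p = gperm k i a b}

/-- The ideal `J̃^⟨t⟩_S`. -/
noncomputable def Jtilde (t : ℕ) (S : Set (Idx r)) : Ideal (MvPolynomial (Idx r) k) :=
  Ideal.span {p | ∃ (a b : Idx r) (i : Fin n),
    Connected S a b ∧ (i : ℕ) < t ∧ a i ≠ b i ∧ p = hbin k S {i} a b}

/-- The ideal `Var^⟨t⟩_S = (x_a : a ∉ S)`. -/
noncomputable def VarIdeal (S : Set (Idx r)) : Ideal (MvPolynomial (Idx r) k) :=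
  Ideal.span {p | ∃ a ∉ S, p = X a}

/-- The ideal `Q^⟨t⟩_S = Var^⟨t⟩_S + J̃^⟨t⟩_S`. -/
noncomputable def Qideal (t : ℕ) (S : Set (Idx r)) : Ideal (MvPolynomial (Idx r) k) :=
  VarIdeal k S + Jtilde k t S

/-- The ideal `Ĵ^⟨t⟩`. -/
noncomputable def Jhat (t : ℕ) : Ideal (MvPolynomial (Idx r) k) :=
  Ideal.span {p | ∃ (a b : Idx r) (i : Fin n),
    hdist a b = 3 ∧ hdistT t a b = 3 ∧ (i : ℕ) < t ∧ a i ≠ b i ∧ p = gperm k i a b}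

/-- `S` is a maximal `t`-signed set. -/
noncomputable def MaximalSigned (t : ℕ) (S : Set (Idx r)) : Prop :=
  Signed t S ∧ ∀ T : Set (Idx r), Signed t T → S ⊆ T → Qideal k t S ≤ Qideal k t T

open Function (update)

section Hamming

variable {a b x y : Idx r} {i l : Fin n}

lemma sw_single (i : Fin n) (a b : Idx r) : sw {i} a b = update a i (b i) := by
  funext j
  by_cases h : j = i
  · subst h; simp [sw]
  · simp [sw, h]

lemma sw_single_of_eq (h : a i = b i) : sw {i} a b = a := by
  rw [sw_single, ← h, Function.update_eq_self]

lemma sw_sw_sw (K : Finset (Fin n)) (a b : Idx r) : sw K (sw K a b) (sw K b a) = a := by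
  funext j
  by_cases h : j ∈ K <;> simp [sw, h]

lemma hdist_sw_sw (K : Finset (Fin n)) (a b : Idx r) : hdist (sw K a b) (sw K b a) = hdist a b := by
  unfold hdist
  congr 1
  ext j
  by_cases h : j ∈ K <;> simp [sw, h, ne_comm]

lemma hdist_comm (a b : Idx r) : hdist a b = hdist b a := by
  simp only [hdist, ne_comm]

lemma eq_of_hdist_eq_one (h : hdist x y = 1) (hi : x i ≠ y i) (hl : l ≠ i) : x l = y l := by
  by_contra hne
  exact hl (Finset.card_le_one.mp h.le l (by simpa using hne) i (by simpa using hi))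

lemma update_eq_update_of_hdist_eq_one (h : hdist x y = 1) (hi : x i ≠ y i) (u : Fin (r i)) :
    update x i u = update y i u := by
  funext l
  by_cases hl : l = i
  · subst hl; simp
  · simp [hl, eq_of_hdist_eq_one h hi hl]

lemma hdist_le_one_of_eq (h : ∀ l ≠ i, x l = y l) : hdist x y ≤ 1 :=
  calc hdist x y ≤ ({i} : Finset (Fin n)).card := Finset.card_le_card fun l hl => by
        by_contra hli
        simp only [mem_filter, mem_univ, true_and, mem_singleton] at hl hli
        exact hl (h l hli)
    _ = 1 := Finset.card_singleton i

lemma hdist_update_update (hxy : x i = y i) {u u' : Fin (r i)} (hu : u ≠ u') :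
    hdist (update x i u) (update y i u') = hdist x y + 1 := by
  have : (univ.filter fun l => update x i u l ≠ update y i u' l) =
      insert i (univ.filter fun l => x l ≠ y l) := by
    ext l
    by_cases hl : l = i
    · subst hl; simp [hu]
    · simp [hl]
  rw [hdist, this, card_insert_of_notMem (by simp [hxy])]
  rfl

lemma hdist_sw_single_left (h : a i ≠ b i) : hdist a (sw {i} a b) = 1 := by
  have := hdist_update_update (x := a) (y := a) rfl h
  rwa [Function.update_eq_self, ← sw_single, show hdist a a = 0 by simp [hdist]] at this

lemma hdist_sw_single_right (h : a i ≠ b i) : hdist (sw {i} a b) b + 1 = hdist a b := by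
  have := hdist_update_update (x := sw {i} a b) (y := b) (by simp [sw]) h
  rwa [sw_single, Function.update_idem, Function.update_eq_self, Function.update_eq_self,
    ← sw_single, eq_comm] at this

end Hamming

section Paths

variable {S : Set (Idx r)} {a b d x y : Idx r} {m : ℕ} {c : ℕ → Idx r}

lemma IsPath.left_mem (h : IsPath S a b m c) : a ∈ S := h.1 ▸ h.2.2.1 0 m.zero_le

lemma IsPath.right_mem (h : IsPath S a b m c) : b ∈ S := h.2.1 ▸ h.2.2.1 m le_rfl

lemma isPath_refl (ha : a ∈ S) : IsPath S a a 0 fun _ => a :=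
  ⟨rfl, rfl, fun _ _ => ha, fun _ hj => absurd hj (Nat.not_lt_zero _)⟩

lemma IsPath.prefix (h : IsPath S a b m c) {j : ℕ} (hj : j ≤ m) : IsPath S a (c j) j c :=
  ⟨h.1, rfl, fun l hl => h.2.2.1 l (hl.trans hj), fun l hl => h.2.2.2 l (hl.trans_le hj)⟩

lemma IsPath.snoc (h : IsPath S a b m c) (hy : y ∈ S) (hby : hdist b y = 1) :
    IsPath S a y (m + 1) (update c (m + 1) y) := by
  obtain ⟨h0, hm, hmem, hstep⟩ := h
  refine ⟨by simp [h0], by simp, fun j hj => ?_, fun j hj => ?_⟩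
  · rcases eq_or_ne j (m + 1) with rfl | hj'
    · simpa
    · rw [Function.update_of_ne hj']
      exact hmem j (by omega)
  · rw [Function.update_of_ne (by omega : j ≠ m + 1)]
    rcases eq_or_ne j m with rfl | hj'
    · simpa [hm] using hby
    · rw [Function.update_of_ne (by omega : j + 1 ≠ m + 1)]
      exact hstep j (by omega)

lemma IsPath.induction_on {p : ℕ → Idx r → Prop} (h : IsPath S a b m c) (h0 : p 0 a)
    (hstep : ∀ j x y, Connected S a x → y ∈ S → hdist x y = 1 → p j x → p (j + 1) y) :
    p m b := by
  induction m generalizing b with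
  | zero => exact h.2.1 ▸ h.1.symm ▸ h0
  | succ m ih =>
    have hpre := h.prefix m.le_succ
    exact h.2.1 ▸ hstep m (c m) (c (m + 1)) ⟨m, c, hpre⟩ (h.2.2.1 _ le_rfl)
      (h.2.2.2 m m.lt_succ_self) (ih hpre)

lemma connected_refl (ha : a ∈ S) : Connected S a a := ⟨0, _, isPath_refl ha⟩

lemma Connected.left_mem (h : Connected S a b) : a ∈ S := h.choose_spec.choose_spec.left_mem

lemma Connected.right_mem (h : Connected S a b) : b ∈ S := h.choose_spec.choose_spec.right_mem

lemma connected_of_hdist_eq_one (ha : a ∈ S) (hb : b ∈ S) (h : hdist a b = 1) :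
    Connected S a b :=
  ⟨_, _, (isPath_refl ha).snoc hb h⟩

lemma Connected.trans (h : Connected S a b) (h' : Connected S b d) : Connected S a d := by
  obtain ⟨m, c, h'⟩ := h'
  refine h'.induction_on (p := fun _ x => Connected S a x) h ?_
  rintro j x y - hy hxy ⟨m', c', hx⟩
  exact ⟨_, _, hx.snoc hy hxy⟩

lemma Connected.symm (h : Connected S a b) : Connected S b a := by
  obtain ⟨m, c, h⟩ := h
  refine h.induction_on (p := fun _ x => Connected S x a) (connected_refl h.left_mem) ?_
  intro j x y hax hy hxy hxa
  exact (connected_of_hdist_eq_one hy hax.right_mem (hdist_comm x y ▸ hxy)).trans hxa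

lemma exists_isPath_pl (h : Connected S a b) : ∃ c, IsPath S a b (pl S a b) c := by
  obtain ⟨m, c, hc⟩ := h
  exact Nat.sInf_mem (s := {m | ∃ c, IsPath S a b m c}) ⟨m, c, hc⟩

end Paths

section Classes

variable {t : ℕ} {S : Set (Idx r)} {a x y ρ : Idx r} {i : Fin n}

def ClassPrefixConst (t : ℕ) (S : Set (Idx r)) (a : Idx r) : Prop :=
  ∀ b c, Connected S a b → Connected S a c → ∀ i : Fin n, (i : ℕ) < t → b i = c i

def ClassDiamLeOne (S : Set (Idx r)) (a : Idx r) : Prop :=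
  ∀ b c, Connected S a b → Connected S a c → hdist b c ≤ 1

def ClassParityIndep (S : Set (Idx r)) (a : Idx r) : Prop :=
  ∀ b c, Connected S a b → Connected S a c →
    ∀ m m' p p', IsPath S b c m p → IsPath S b c m' p' → m % 2 = m' % 2

lemma classDiamLeOne_of_forall_edge
    (hedge : ∀ x y, Connected S a x → y ∈ S → hdist x y = 1 → x i ≠ y i) :
    ClassDiamLeOne S a := by
  intro b c hab hac
  obtain ⟨m, p, h⟩ := hab.symm.trans hac
  refine hdist_le_one_of_eq (i := i) (h.induction_on (p := fun _ x => ∀ l ≠ i, b l = x l)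
    (fun _ _ => rfl) ?_)
  intro j x y hbx hy hxy hx l hl
  rw [hx l hl]
  exact eq_of_hdist_eq_one hxy (hedge x y (hab.trans hbx) hy hxy) hl

lemma classParityIndep_of_flip {K : Type*} [Field K] (h2 : (2 : K) ≠ 0) (Φ : Idx r → K)
    (hΦ : ∀ x, Connected S a x → Φ x ≠ 0)
    (hflip : ∀ x y, Connected S a x → y ∈ S → hdist x y = 1 → Φ y = -Φ x) :
    ClassParityIndep S a := by
  have hpath : ∀ {b c m p}, Connected S a b → IsPath S b c m p → Φ c = (-1) ^ m * Φ b :=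
    fun hab h => h.induction_on (p := fun j x => Φ x = (-1) ^ j * Φ _) (by simp)
      fun j x y hbx hy hxy hx => by
        rw [hflip x y (hab.trans hbx) hy hxy, hx, pow_succ]
        ring
  intro b c hab hac m m' p p' h h'
  have hpow : ((-1 : K)) ^ m = (-1) ^ m' :=
    mul_right_cancel₀ (hΦ b hab) ((hpath hab h).symm.trans (hpath hab h'))
  have heven : Even (m + m') := by
    refine (neg_one_pow_eq_one_iff_even fun h1 => h2 (by linear_combination -h1)).mp ?_
    rw [pow_add, ← hpow, ← pow_add, ← two_mul, pow_mul]
    simp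
  rw [Nat.even_iff] at heven
  omega

lemma ClassParityIndep.pl_mod_two (hP : ClassParityIndep S a) (hρ : Connected S a ρ)
    (hx : Connected S a x) (hy : y ∈ S) (hxy : hdist x y = 1) :
    pl S ρ y % 2 = (pl S ρ x + 1) % 2 := by
  obtain ⟨c, hc⟩ := exists_isPath_pl (hρ.symm.trans hx)
  have hc' := hc.snoc hy hxy
  obtain ⟨c', hc''⟩ := exists_isPath_pl ⟨_, _, hc'⟩
  exact hP ρ y hρ (hx.trans (connected_of_hdist_eq_one hx.right_mem hy hxy)) _ _ _ _ hc'' hc'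

end Classes

def IsSlicePermZero {A : Type*} [CommRing A] (t : ℕ) (f : Idx r → A) : Prop :=
  ∀ (a b : Idx r) (i : Fin n), hdist a b = 2 → (i : ℕ) < t → a i ≠ b i →
    f a * f b + f (sw {i} a b) * f (sw {i} b a) = 0

variable {k} in
lemma Jt_le_ker_iff {t : ℕ} {A : Type*} [CommRing A] (φ : MvPolynomial (Idx r) k →+* A) :
    Jt k t ≤ RingHom.ker φ ↔ IsSlicePermZero t fun a => φ (X a) := by
  rw [Jt, Ideal.span_le]
  constructor
  · intro h a b i hd ht hab
    simpa [gperm] using h ⟨a, b, i, hd, ht, hab, rfl⟩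
  · rintro h _ ⟨a, b, i, hd, ht, hab, rfl⟩
    simpa [gperm] using h a b i hd ht hab

section Support

variable {K : Type*} [Field K] {t : ℕ} {f : Idx r → K} {a b c x y : Idx r} {i : Fin n}

lemma IsSlicePermZero.mul_add_mul_update_eq_zero (hf : IsSlicePermZero t f)
    (hxy : hdist x y = 1) (hi : x i = y i) (ht : (i : ℕ) < t) {u u' : Fin (r i)} (hu : u ≠ u') :
    f (update x i u) * f (update y i u') + f (update x i u') * f (update y i u) = 0 := by
  have := hf (update x i u) (update y i u') i (by rw [hdist_update_update hi hu, hxy]) ht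
    (by simpa using hu)
  simpa [sw_single] using this

lemma IsSlicePermZero.switchable (hf : IsSlicePermZero t f) :
    Switchable t (Function.support f) := by
  intro a ha b hb hd i ht
  by_cases hab : a i = b i
  · rw [sw_single_of_eq hab, sw_single_of_eq hab.symm]
    exact ⟨ha, hb⟩
  · have h := hf a b i hd ht hab
    exact mul_ne_zero_iff.mp fun h0 => mul_ne_zero ha hb (by linear_combination h - h0)

lemma IsSlicePermZero.update_ne_zero (hf : IsSlicePermZero t f)
    (hab : Connected (Function.support f) a b) (ht : (i : ℕ) < t) {u : Fin (r i)}
    (hu : f (update a i u) ≠ 0) : f (update b i u) ≠ 0 := by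
  obtain ⟨m, c, h⟩ := hab
  refine h.induction_on (p := fun _ x => f (update x i u) ≠ 0) hu ?_
  intro j x y hx hy hxy hxu
  by_cases hxi : x i = y i
  · by_cases hyu : u = y i
    · rwa [hyu, Function.update_eq_self]
    · have h := hf.mul_add_mul_update_eq_zero hxy hxi ht hyu
      rw [Function.update_eq_self, ← hxi, Function.update_eq_self] at h
      exact fun h0 => mul_ne_zero hxu hy (by linear_combination h - f x * h0)
  · rwa [← update_eq_update_of_hdist_eq_one hxy hxi]

lemma IsSlicePermZero.update_apply_ne_zero (hf : IsSlicePermZero t f)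
    (hcb : Connected (Function.support f) c b) (ht : (i : ℕ) < t) : f (update b i (c i)) ≠ 0 :=
  hf.update_ne_zero hcb ht (by rw [Function.update_eq_self]; exact hcb.left_mem)

lemma IsSlicePermZero.false_of_three_values (h2 : (2 : K) ≠ 0) (hf : IsSlicePermZero t f)
    (hxy : hdist x y = 1) (hi : x i = y i) (ht : (i : ℕ) < t) {u₁ u₂ u₃ : Fin (r i)}
    (h12 : u₁ ≠ u₂) (h13 : u₁ ≠ u₃) (h23 : u₂ ≠ u₃) (hx₃ : f (update x i u₃) ≠ 0)
    (hy₁ : f (update y i u₁) ≠ 0) (hy₂ : f (update y i u₂) ≠ 0) : False := by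
  have key : 2 * (f (update x i u₃) * f (update y i u₁) * f (update y i u₂)) = 0 := by
    linear_combination f (update y i u₁) * hf.mul_add_mul_update_eq_zero hxy hi ht h23
      + f (update y i u₂) * hf.mul_add_mul_update_eq_zero hxy hi ht h13
      - f (update y i u₃) * hf.mul_add_mul_update_eq_zero hxy hi ht h12
  simp [h2, hx₃, hy₁, hy₂] at key

lemma IsSlicePermZero.classParityIndep (h2 : (2 : K) ≠ 0) (hf : IsSlicePermZero t f)
    (ht : (i : ℕ) < t) {p q : Fin (r i)} (hpq : p ≠ q)
    (hval : ∀ x, Connected (Function.support f) a x → x i = p ∨ x i = q)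
    (hp : ∀ x, Connected (Function.support f) a x → f (update x i p) ≠ 0)
    (hq : ∀ x, Connected (Function.support f) a x → f (update x i q) ≠ 0) :
    ClassParityIndep (Function.support f) a := by
  refine classParityIndep_of_flip h2
    (fun x => f (update x i p) / f (update x i q) * if x i = p then 1 else -1)
    (fun x hx => by split_ifs <;> simp [hp x hx, hq x hx]) ?_
  intro x y hx hy hxy
  have hy' := hx.trans (connected_of_hdist_eq_one hx.right_mem hy hxy)
  by_cases hxi : x i = y i
  · have h := hf.mul_add_mul_update_eq_zero hxy hxi ht hpq
    have hratio : f (update y i p) / f (update y i q) = -(f (update x i p) / f (update x i q)) := by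
      field_simp [hq x hx, hq y hy']
      linear_combination h
    rw [hxi, hratio]
    ring
  · simp only [update_eq_update_of_hdist_eq_one hxy hxi]
    rcases hval x hx with hx' | hx' <;> rcases hval y hy' with hy'' | hy'' <;>
      simp_all [Ne.symm hpq]

lemma IsSlicePermZero.classPrefixConst_or_classDiamLeOne_or_classParityIndep (h2 : (2 : K) ≠ 0) (hf : IsSlicePermZero t f) :
    ClassPrefixConst t (Function.support f) a ∨ ClassDiamLeOne (Function.support f) a ∨
      ClassParityIndep (Function.support f) a := by
  rw [or_iff_not_imp_left]
  intro h1
  unfold ClassPrefixConst at h1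
  push Not at h1
  obtain ⟨b, c, hab, hac, i, ht, hbc⟩ := h1
  by_cases hedge :
      ∀ x y, Connected (Function.support f) a x → f y ≠ 0 → hdist x y = 1 → x i ≠ y i
  · exact Or.inl (classDiamLeOne_of_forall_edge hedge)
  push Not at hedge
  obtain ⟨x, y, hx, hy, hxy, hxi⟩ := hedge
  have hy' := hx.trans (connected_of_hdist_eq_one hx.right_mem hy hxy)
  refine Or.inr (hf.classParityIndep h2 ht hbc (fun z hz => ?_)
    (fun z hz => hf.update_apply_ne_zero (hab.symm.trans hz) ht)
    (fun z hz => hf.update_apply_ne_zero (hac.symm.trans hz) ht))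
  by_contra! hz'
  exact hf.false_of_three_values h2 hxy hxi ht hbc (Ne.symm hz'.1) (Ne.symm hz'.2)
    (hf.update_apply_ne_zero (hz.symm.trans hx) ht)
    (hf.update_apply_ne_zero (hab.symm.trans hy') ht)
    (hf.update_apply_ne_zero (hac.symm.trans hy') ht)

theorem IsSlicePermZero.signed_support (h2 : (2 : K) ≠ 0) (hf : IsSlicePermZero t f) :
    Signed t (Function.support f) :=
  ⟨hf.switchable, fun _ _ => hf.classPrefixConst_or_classDiamLeOne_or_classParityIndep h2⟩

end Support

section SignedPoint

variable {t : ℕ} {S : Set (Idx r)} {K : Type*} [Field K] {ι : K} {a b x y : Idx r} {i : Fin n}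

noncomputable def classRep (S : Set (Idx r)) (x : Idx r) : Idx r :=
  haveI : Nonempty (Idx r) := ⟨x⟩
  Classical.epsilon fun y => Connected S y x

lemma connected_classRep (hx : x ∈ S) : Connected S (classRep S x) x :=
  haveI : Nonempty (Idx r) := ⟨x⟩
  Classical.epsilon_spec (p := fun y => Connected S y x) ⟨x, connected_refl hx⟩

lemma classRep_eq (h : Connected S x y) : classRep S x = classRep S y := by
  unfold classRep
  congr 1
  exact funext fun z => propext ⟨fun hz => hz.trans h, fun hz => hz.trans h.symm⟩

open Classical in
noncomputable def signedPoint (t : ℕ) (S : Set (Idx r)) (ι : K) (x : Idx r) : K :=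
  if x ∉ S then 0
  else if ClassPrefixConst t S x ∨ ClassDiamLeOne S x then 1
  else ι ^ (pl S (classRep S x) x % 2)

lemma signedPoint_ne_zero (hι : ι ^ 2 = -1) (hx : x ∈ S) : signedPoint t S ι x ≠ 0 := by
  have hι0 : ι ≠ 0 := by rintro rfl; norm_num at hι
  unfold signedPoint
  split_ifs <;> simp [hι0]

lemma signedPoint_of_notMem (hx : x ∉ S) : signedPoint t S ι x = 0 := if_pos hx

lemma signedPoint_eq_pow (hd : hdist a b = 2) (ht : (i : ℕ) < t) (hab : a i ≠ b i)
    (hxa : Connected S x a) (hxb : Connected S x b) :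
    signedPoint t S ι x = ι ^ (pl S (classRep S a) x % 2) := by
  have h1 : ¬ ClassPrefixConst t S x := fun h => hab (h a b hxa hxb i ht)
  have h2 : ¬ ClassDiamLeOne S x := fun h => absurd (h a b hxa hxb) (by omega)
  rw [signedPoint, if_neg (not_not.mpr hxa.left_mem), if_neg (not_or.mpr ⟨h1, h2⟩),
    classRep_eq hxa]

theorem Signed.isSlicePermZero_signedPoint (hS : Signed t S) (hι : ι ^ 2 = -1) :
    IsSlicePermZero t (signedPoint t S ι) := by
  intro a b i hd ht hab
  by_cases hmem : a ∈ S ∧ b ∈ S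
  swap
  · have hsw : ¬ (sw {i} a b ∈ S ∧ sw {i} b a ∈ S) := fun h => hmem (by
      simpa [sw_sw_sw] using hS.1 _ h.1 _ h.2 (by rw [hdist_sw_sw, hd]) i ht)
    rcases not_and_or.mp hmem with h | h <;> rcases not_and_or.mp hsw with h' | h' <;>
      simp [signedPoint_of_notMem, h, h']
  obtain ⟨ha, hb⟩ := hmem
  obtain ⟨hs, hs'⟩ := hS.1 a ha b hb hd i ht
  have has : hdist a (sw {i} a b) = 1 := hdist_sw_single_left hab
  have hsb : hdist (sw {i} a b) b = 1 := by have := hdist_sw_single_right hab; omega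
  have hbs' : hdist b (sw {i} b a) = 1 := hdist_sw_single_left (Ne.symm hab)
  have cas := connected_of_hdist_eq_one ha hs has
  have csb := connected_of_hdist_eq_one hs hb hsb
  have cbs' := connected_of_hdist_eq_one hb hs' hbs'
  have cab := cas.trans csb
  have hP : ClassParityIndep S a := by
    rcases hS.2 a ha with h | h | h
    · exact absurd (h a b (connected_refl ha) cab i ht) hab
    · exact absurd (h a b (connected_refl ha) cab) (by omega)
    · exact h
  have hρ : Connected S a (classRep S a) := (connected_classRep ha).symm
  have ps := hP.pl_mod_two hρ (connected_refl ha) hs has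
  have pb := hP.pl_mod_two hρ cas hb hsb
  have ps' := hP.pl_mod_two hρ cab hs' hbs'
  rw [signedPoint_eq_pow hd ht hab (connected_refl ha) cab,
    signedPoint_eq_pow hd ht hab cab.symm (connected_refl hb),
    signedPoint_eq_pow hd ht hab cas.symm csb,
    signedPoint_eq_pow hd ht hab (cab.trans cbs').symm cbs'.symm,
    show pl S (classRep S a) b % 2 = pl S (classRep S a) a % 2 by omega, ps,
    show pl S (classRep S a) (sw {i} b a) % 2 = (pl S (classRep S a) a + 1) % 2 by omega]
  generalize pl S (classRep S a) a = e
  rcases Nat.mod_two_eq_zero_or_one e with he | he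
  · rw [he, show (e + 1) % 2 = 1 by omega]
    linear_combination hι
  · rw [he, show (e + 1) % 2 = 0 by omega]
    linear_combination hι

end SignedPoint

/-- a square-free monomial lies in the radical of `J^⟨t⟩` iff its support
is contained in no `t`-signed set. -/
theorem stmt18 (h2 : (2 : k) ≠ 0) (t : ℕ) (M : Finset (Idx r)) :
    (∏ a ∈ M, X a : MvPolynomial (Idx r) k) ∈ (Jt k t).radical ↔
      ∀ S : Set (Idx r), Signed t S → ¬ (↑M : Set (Idx r)) ⊆ S := by
  constructor
  · intro hrad S hS hMS
    obtain ⟨ι, hι⟩ := IsAlgClosed.exists_pow_nat_eq (-1 : AlgebraicClosure k) two_pos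
    let φ :=
      (aeval (signedPoint t S ι) : MvPolynomial (Idx r) k →ₐ[k] AlgebraicClosure k).toRingHom
    have hJ : Jt k t ≤ RingHom.ker φ :=
      (Jt_le_ker_iff φ).mpr (by simpa [φ] using hS.isSlicePermZero_signedPoint hι)
    have hzero := (RingHom.ker_isPrime φ).radical_le_iff.mpr hJ hrad
    rw [RingHom.mem_ker, map_prod] at hzero
    obtain ⟨a, ha, hfa⟩ := Finset.prod_eq_zero_iff.mp hzero
    exact signedPoint_ne_zero hι (hMS ha) (by simpa [φ] using hfa)
  · intro hall
    by_contra hrad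
    rw [Ideal.radical_eq_sInf, Submodule.mem_sInf] at hrad
    push Not at hrad
    obtain ⟨P, ⟨hJP, hP⟩, hMP⟩ := hrad
    let φ := (algebraMap (MvPolynomial (Idx r) k ⧸ P)
      (FractionRing (MvPolynomial (Idx r) k ⧸ P))).comp (Ideal.Quotient.mk P)
    have hker : RingHom.ker φ = P := by
      ext p
      simp [φ, Ideal.Quotient.eq_zero_iff_mem]
    have h2K : (2 : FractionRing (MvPolynomial (Idx r) k ⧸ P)) ≠ 0 := by
      have := (map_ne_zero (φ.comp C)).mpr h2
      rwa [RingHom.comp_apply, map_ofNat C 2, map_ofNat] at this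
    refine hall _ (((Jt_le_ker_iff φ).mp (hker.symm ▸ hJP)).signed_support h2K) fun a ha => ?_
    have hM : φ (∏ a ∈ M, X a) ≠ 0 := fun h => hMP (hker ▸ h)
    rw [map_prod] at hM
    exact Finset.prod_ne_zero_iff.mp hM a ha
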